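/- arXiv:2001.09931 — 7 statements merged into one kernel-verified Lean document; each statement's English description precedes it below -/
import Mathlib

section
/- Let n ≥ 1 and let f : ℝⁿ → ℝ be quasi-convex and upper semicontinuous. Then for every x ∈ ℝⁿ, the star subdifferential ∂*f(x) contains a nonzero element, i.e., ∂*f(x) \ {0} ≠ ∅. -/
/-- The star subdifferential of `f` at `x`. -/
def starSubdiff {n : ℕ} (f : EuclideanSpace ℝ (Fin n) → ℝ) (x : EuclideanSpace ℝ (Fin n)) :
    Set (EuclideanSpace ℝ (Fin n)) :=
  {g | ∀ y : EuclideanSpace ℝ (Fin n), f y < f x → (inner ℝ g (y - x) : ℝ) ≤ 0}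

/-!
If the strict sublevel set `{y | f y < f x}` is empty, every vector lies in `∂*f(x)`, and `ℝⁿ`
has a nonzero vector since `n ≥ 1`. Otherwise the set is convex (quasi-convexity), open (upper
semicontinuity) and misses `x`, so Hahn–Banach separates it strictly from `x` by a functional
`⟪g, ·⟫`; strictness on a nonempty set forces `g ≠ 0`.
-/

open scoped RealInnerProductSpace

theorem exists_inner_sub_neg_of_convex_of_isOpen {E : Type*} [NormedAddCommGroup E]
    [InnerProductSpace ℝ E] [CompleteSpace E] {s : Set E} {x : E} (hconv : Convex ℝ s)
    (hopen : IsOpen s) (hx : x ∉ s) : ∃ g : E, ∀ y ∈ s, ⟪g, y - x⟫ < 0 := by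
  obtain ⟨φ, hφ⟩ := geometric_hahn_banach_open_point hconv hopen hx
  refine ⟨(InnerProductSpace.toDual ℝ E).symm φ, fun y hy => ?_⟩
  rw [InnerProductSpace.toDual_symm_apply, map_sub, sub_neg]
  exact hφ y hy

/-- For a quasi-convex upper semicontinuous function on `ℝⁿ` (with `n ≥ 1`), the star
subdifferential at every point contains a nonzero element. -/
theorem starSubdiff_nonzero_nonempty {n : ℕ} (hn : 1 ≤ n)
    (f : EuclideanSpace ℝ (Fin n) → ℝ)
    (hqc : ∀ lam : ℝ, Convex ℝ {y : EuclideanSpace ℝ (Fin n) | f y ≤ lam})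
    (husc : ∀ lam : ℝ, IsOpen {y : EuclideanSpace ℝ (Fin n) | f y < lam})
    (x : EuclideanSpace ℝ (Fin n)) :
    ∃ g ∈ starSubdiff f x, g ≠ 0 := by
  by_cases hne : {y | f y < f x}.Nonempty
  · have hconv : Convex ℝ {y | f y < f x} := by
      simpa using QuasiconvexOn.convex_lt (s := Set.univ) (fun r => by simpa using hqc r) (f x)
    obtain ⟨g, hg⟩ := exists_inner_sub_neg_of_convex_of_isOpen hconv (husc (f x))
      (lt_irrefl (f x))
    obtain ⟨y₀, hy₀⟩ := hne
    refine ⟨g, fun y hy => (hg y hy).le, ?_⟩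
    rintro rfl
    simpa using hg y₀ hy₀
  · have : Nontrivial (EuclideanSpace ℝ (Fin n)) :=
      Module.nontrivial_of_finrank_pos (R := ℝ) (by rwa [finrank_euclideanSpace_fin])
    obtain ⟨g, hg⟩ := exists_ne (0 : EuclideanSpace ℝ (Fin n))
    exact ⟨g, fun y hy => absurd ⟨y, hy⟩ hne, hg⟩
end

section
/- Let f : ℝⁿ → ℝ be quasi-convex and upper semicontinuous with S^f_{<,0} ≠ ∅, and suppose f satisfies property (sHöl) on S^f_{≤,0} with order δ > 0 and modulus L > 0. Then for every x ∈ ℝⁿ with x ∉ S^f_{≤,0}, every q ∈ S^f_{≤,0}, and every nonzero c ∈ ∂*f(x), it holds that f₊(x) ≤ L · ⟨c/‖c‖, x − q⟩^δ. -/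
open scoped RealInnerProductSpace

section HoelderStar

variable {E : Type*} [NormedAddCommGroup E] [InnerProductSpace ℝ E] {f : E → ℝ} {x q u : E}

theorem le_inner_sub_of_apply_add_smul_lt (hu : ‖u‖ = 1)
    (hstar : ∀ y, f y < f x → ⟪u, y - x⟫ ≤ 0) {s : ℝ} (hs : f (q + s • u) < f x) :
    s ≤ ⟪u, x - q⟫ := by
  have hinner : ⟪u, q + s • u - x⟫ = s - ⟪u, x - q⟫ := by
    rw [show q + s • u - x = s • u - (x - q) by abel, inner_sub_right, real_inner_smul_right,
      inner_self_eq_one_of_norm_eq_one hu, mul_one]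
  linarith [hstar _ hs]

theorem apply_add_smul_le_of_hoelder {L δ : ℝ} (hu : ‖u‖ = 1)
    (hhol : ∀ x', |f x' - f q| ≤ L * ‖x' - q‖ ^ δ) {s : ℝ} (hs : 0 ≤ s) :
    f (q + s • u) ≤ f q + L * s ^ δ := by
  have h := hhol (q + s • u)
  rw [add_sub_cancel_left, norm_smul, hu, mul_one, Real.norm_of_nonneg hs] at h
  linarith [le_abs_self (f (q + s • u) - f q)]

theorem sub_le_mul_inner_rpow_of_hoelder {L δ : ℝ} (hδ : 0 < δ) (hL : 0 < L) (hu : ‖u‖ = 1)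
    (hstar : ∀ y, f y < f x → ⟪u, y - x⟫ ≤ 0)
    (hhol : ∀ x', |f x' - f q| ≤ L * ‖x' - q‖ ^ δ) (hqx : f q < f x) :
    f x - f q ≤ L * ⟪u, x - q⟫ ^ δ := by
  set r := ((f x - f q) / L) ^ δ⁻¹
  have hgap : 0 < (f x - f q) / L := div_pos (sub_pos.mpr hqx) hL
  have hr : L * r ^ δ = f x - f q := by
    rw [Real.rpow_inv_rpow hgap.le hδ.ne', mul_div_cancel₀ _ hL.ne']
  have hr_le : r ≤ ⟪u, x - q⟫ := by
    refine le_of_forall_lt_imp_le_of_dense fun s hs => (le_max_left s 0).trans ?_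
    have hs' : max s 0 < r := max_lt hs (Real.rpow_pos_of_pos hgap _)
    refine le_inner_sub_of_apply_add_smul_lt hu hstar ?_
    have hpow : L * max s 0 ^ δ < L * r ^ δ :=
      mul_lt_mul_of_pos_left (Real.rpow_lt_rpow (le_max_right s 0) hs' hδ) hL
    linarith [apply_add_smul_le_of_hoelder hu hhol (le_max_right s 0)]
  calc f x - f q = L * r ^ δ := hr.symm
    _ ≤ L * ⟪u, x - q⟫ ^ δ := by gcongr

end HoelderStar

theorem starSubdiff_hoelder_bound_general {n : ℕ}
    (f : EuclideanSpace ℝ (Fin n) → ℝ) (δ L : ℝ) (hδ : 0 < δ) (hL : 0 < L)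
    (hhol : ∀ q x' : EuclideanSpace ℝ (Fin n), f q ≤ 0 → |f x' - f q| ≤ L * ‖x' - q‖ ^ δ)
    (x q c : EuclideanSpace ℝ (Fin n))
    (hx : ¬ f x ≤ 0) (hq : f q ≤ 0) (hc : c ∈ starSubdiff f x) (hc0 : c ≠ 0) :
    max (f x) 0 ≤ L * (inner ℝ (‖c‖⁻¹ • c) (x - q) : ℝ) ^ δ := by
  have hfx : 0 < f x := lt_of_not_ge hx
  have hstar : ∀ y, f y < f x → ⟪‖c‖⁻¹ • c, y - x⟫ ≤ 0 := fun y hy => by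
    rw [real_inner_smul_left]
    exact mul_nonpos_of_nonneg_of_nonpos (by positivity) (hc y hy)
  have hu : ‖‖c‖⁻¹ • c‖ = 1 := norm_smul_inv_norm hc0
  have hbound := sub_le_mul_inner_rpow_of_hoelder hδ hL hu hstar
    (fun x' => hhol q x' hq) (by linarith)
  rw [max_eq_left hfx.le]
  linarith

/-- Konnov's lemma: if `f` is quasi-convex, upper semicontinuous, has a nonempty strict zero
sublevel set and satisfies the Hölder-type property (sHöl) on `S^f_{≤,0}` with order `δ > 0` and
modulus `L > 0`, then for every `x ∉ S^f_{≤,0}`, every `q ∈ S^f_{≤,0}` and every nonzero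
`c ∈ ∂*f(x)` one has `f₊(x) ≤ L⟪c/‖c‖, x - q⟫^δ`. -/
theorem starSubdiff_hoelder_bound {n : ℕ}
    (f : EuclideanSpace ℝ (Fin n) → ℝ) (δ L : ℝ) (hδ : 0 < δ) (hL : 0 < L)
    (hqc : ∀ lam : ℝ, Convex ℝ {y : EuclideanSpace ℝ (Fin n) | f y ≤ lam})
    (husc : ∀ lam : ℝ, IsOpen {y : EuclideanSpace ℝ (Fin n) | f y < lam})
    (hne : {y : EuclideanSpace ℝ (Fin n) | f y < 0}.Nonempty)
    (hhol : ∀ q x' : EuclideanSpace ℝ (Fin n), f q ≤ 0 → |f x' - f q| ≤ L * ‖x' - q‖ ^ δ)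
    (x q c : EuclideanSpace ℝ (Fin n))
    (hx : ¬ f x ≤ 0) (hq : f q ≤ 0) (hc : c ∈ starSubdiff f x) (hc0 : c ≠ 0) :
    max (f x) 0 ≤ L * (inner ℝ (‖c‖⁻¹ • c) (x - q) : ℝ) ^ δ :=
  starSubdiff_hoelder_bound_general f δ L hδ hL hhol x q c hx hq hc hc0
end

section
/- Let f : ℝⁿ → ℝ be quasi-convex and upper semicontinuous with S^f_{<,0} ≠ ∅, satisfying property (sHöl) on S^f_{≤,0} with order δ > 0 and modulus L > 0, let c : ℝⁿ → ℝⁿ be a selection with c(x) ∈ ∂*f(x) \ {0} whenever f(x) > 0, and let P_f be the associated star subgradient projection. Then P_f is a cutter: ⟨P_f(x) − x, P_f(x) − y⟩ ≤ 0 for all x ∈ ℝⁿ and all y ∈ Fix P_f. -/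
/-- The star subgradient projection relative to `f`, with modulus `L`, order `δ` and
star subgradient selection `c`. -/
noncomputable def starProj {n : ℕ} (f : EuclideanSpace ℝ (Fin n) → ℝ) (L δ : ℝ)
    (c : EuclideanSpace ℝ (Fin n) → EuclideanSpace ℝ (Fin n)) (x : EuclideanSpace ℝ (Fin n)) :
    EuclideanSpace ℝ (Fin n) :=
  if 0 < f x then x - ((max (f x) 0 / L) ^ (1 / δ)) • (‖c x‖⁻¹ • c x) else x

open Metric

theorem lt_mul_rpow_of_mem_ball {E : Type*} [SeminormedAddCommGroup E] {f : E → ℝ} {y z : E}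
    {L δ r : ℝ} (hL : 0 < L) (hδ : 0 < δ) (hy : f y ≤ 0) (hhol : |f z - f y| ≤ L * ‖z - y‖ ^ δ) (hz : z ∈ ball y r) :
    f z < L * r ^ δ := by
  rw [mem_ball, dist_eq_norm] at hz
  have hpow : ‖z - y‖ ^ δ < r ^ δ := Real.rpow_lt_rpow (norm_nonneg _) hz hδ
  nlinarith [le_abs_self (f z - f y)]

section InnerProductSpace

variable {E : Type*} [NormedAddCommGroup E] [InnerProductSpace ℝ E]

theorem le_inner_sub_of_ball_subset_halfspace {u x y : E} {r : ℝ} (hu : ‖u‖ = 1) (hr : 0 < r)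
    (h : ∀ z ∈ ball y r, inner ℝ u (z - x) ≤ 0) : r ≤ inner ℝ u (x - y) := by
  by_contra! hlt
  obtain ⟨s, hs, hsr⟩ := exists_between (max_lt hlt hr : max (inner ℝ u (x - y)) 0 < r)
  have hs₀ : 0 < s := (le_max_right _ _).trans_lt hs
  have hz : y + s • u ∈ ball y r := by
    rwa [mem_ball, dist_eq_norm, add_sub_cancel_left, norm_smul, hu, mul_one,
      Real.norm_of_nonneg hs₀.le]
  have hinner : inner ℝ u (y + s • u - x) = s - inner ℝ u (x - y) := by
    rw [show y + s • u - x = s • u - (x - y) by abel, inner_sub_right, real_inner_smul_right,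
      real_inner_self_eq_norm_sq, hu]
    ring
  linarith [h _ hz, le_max_left (inner ℝ u (x - y)) 0]

theorem inner_sub_smul_sub_nonpos {u x y : E} {r : ℝ} (hu : ‖u‖ = 1) (hr : 0 ≤ r)
    (h : r ≤ inner ℝ u (x - y)) : inner ℝ (x - r • u - x) (x - r • u - y) ≤ 0 := by
  have hexpand : inner ℝ (x - r • u - x) (x - r • u - y) = r * (r - inner ℝ u (x - y)) := by
    rw [show x - r • u - x = -(r • u) by abel, show x - r • u - y = (x - y) - r • u by abel,
      inner_neg_left, inner_sub_right, real_inner_smul_left, real_inner_smul_left,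
      real_inner_smul_right, real_inner_self_eq_norm_sq, hu]
    ring
  rw [hexpand]
  exact mul_nonpos_of_nonneg_of_nonpos hr (by linarith)

end InnerProductSpace

theorem mul_rpow_one_div_rpow {t L δ : ℝ} (ht : 0 ≤ t) (hL : 0 < L) (hδ : δ ≠ 0) :
    L * ((t / L) ^ (1 / δ)) ^ δ = t := by
  rw [← Real.rpow_mul (by positivity), one_div_mul_cancel hδ, Real.rpow_one]
  field_simp

section StarProj

variable {n : ℕ} {f : EuclideanSpace ℝ (Fin n) → ℝ} {L δ : ℝ}
  {c : EuclideanSpace ℝ (Fin n) → EuclideanSpace ℝ (Fin n)} {x : EuclideanSpace ℝ (Fin n)}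

theorem starProj_of_pos (hx : 0 < f x) :
    starProj f L δ c x = x - (f x / L) ^ (1 / δ) • (‖c x‖⁻¹ • c x) := by
  simp only [starProj, hx, if_true, max_eq_left hx.le]

theorem starProj_of_nonpos (hx : f x ≤ 0) : starProj f L δ c x = x := by
  simp only [starProj, not_lt.mpr hx, if_false]

theorem starProj_eq_self_iff (hL : 0 < L) (hc : 0 < f x → c x ≠ 0) :
    starProj f L δ c x = x ↔ f x ≤ 0 := by
  refine ⟨fun hfix => ?_, starProj_of_nonpos⟩
  by_contra! hx
  rw [starProj_of_pos hx, sub_eq_self, smul_eq_zero, smul_eq_zero, inv_eq_zero, norm_eq_zero,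
    or_self] at hfix
  exact hfix.elim (Real.rpow_pos_of_pos (div_pos hx hL) _).ne' (hc hx)

end StarProj

theorem starProj_isCutter_general {n : ℕ}
    (f : EuclideanSpace ℝ (Fin n) → ℝ) (δ L : ℝ) (hδ : 0 < δ) (hL : 0 < L)
    (hhol : ∀ q x' : EuclideanSpace ℝ (Fin n), f q ≤ 0 → |f x' - f q| ≤ L * ‖x' - q‖ ^ δ)
    (c : EuclideanSpace ℝ (Fin n) → EuclideanSpace ℝ (Fin n))
    (hc : ∀ x, 0 < f x → c x ∈ starSubdiff f x ∧ c x ≠ 0) :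
    ∀ x y : EuclideanSpace ℝ (Fin n), starProj f L δ c y = y →
      (inner ℝ (starProj f L δ c x - x) (starProj f L δ c x - y) : ℝ) ≤ 0 := by
  intro x y hfix
  rcases le_or_gt (f x) 0 with hx | hx
  · simp [starProj_of_nonpos hx]
  have hy : f y ≤ 0 := (starProj_eq_self_iff hL fun h => (hc y h).2).mp hfix
  obtain ⟨hsub, hcx⟩ := hc x hx
  set r := (f x / L) ^ (1 / δ)
  have hr : 0 < r := Real.rpow_pos_of_pos (div_pos hx hL) _
  have hball : ∀ z ∈ ball y r, f z < f x := fun z hz =>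
    mul_rpow_one_div_rpow hx.le hL hδ.ne' ▸ lt_mul_rpow_of_mem_ball hL hδ hy (hhol y z hy) hz
  have hhalf : ∀ z ∈ ball y r, inner ℝ (‖c x‖⁻¹ • c x) (z - x) ≤ 0 := fun z hz => by
    rw [real_inner_smul_left]
    exact mul_nonpos_of_nonneg_of_nonpos (by positivity) (hsub z (hball z hz))
  have hu : ‖‖c x‖⁻¹ • c x‖ = 1 := norm_smul_inv_norm hcx
  rw [starProj_of_pos hx]
  exact inner_sub_smul_sub_nonpos hu hr.le (le_inner_sub_of_ball_subset_halfspace hu hr hhalf)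

/-- The star subgradient projection is a cutter:
`⟪P_f x - x, P_f x - y⟫ ≤ 0` for every `x` and every fixed point `y` of `P_f`. -/
theorem starProj_isCutter {n : ℕ}
    (f : EuclideanSpace ℝ (Fin n) → ℝ) (δ L : ℝ) (hδ : 0 < δ) (hL : 0 < L)
    (hqc : ∀ lam : ℝ, Convex ℝ {y : EuclideanSpace ℝ (Fin n) | f y ≤ lam})
    (husc : ∀ lam : ℝ, IsOpen {y : EuclideanSpace ℝ (Fin n) | f y < lam})
    (hne : {y : EuclideanSpace ℝ (Fin n) | f y < 0}.Nonempty)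
    (hhol : ∀ q x' : EuclideanSpace ℝ (Fin n), f q ≤ 0 → |f x' - f q| ≤ L * ‖x' - q‖ ^ δ)
    (c : EuclideanSpace ℝ (Fin n) → EuclideanSpace ℝ (Fin n))
    (hc : ∀ x, 0 < f x → c x ∈ starSubdiff f x ∧ c x ≠ 0) :
    ∀ x y : EuclideanSpace ℝ (Fin n), starProj f L δ c y = y →
      (inner ℝ (starProj f L δ c x - x) (starProj f L δ c x - y) : ℝ) ≤ 0 :=
  starProj_isCutter_general f δ L hδ hL hhol c hc
end

section
/- Let f : ℝⁿ → ℝ be quasi-convex, upper semicontinuous, and 0-lower semicontinuous, with S^f_{<,0} ≠ ∅, satisfying property (sHöl) on S^f_{≤,0} with order δ > 0 and modulus L > 0, let c : ℝⁿ → ℝⁿ be a selection with c(x) ∈ ∂*f(x) \ {0} whenever f(x) > 0, and let P_f be the associated star subgradient projection. Then P_f is fixed-point closed: for every sequence {x_k} in ℝⁿ with x_k → x and ‖P_f(x_k) − x_k‖ → 0, one has x ∈ Fix P_f. -/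
/-! Along a sequence with `‖P_f x_k - x_k‖ → 0` one has `f₊ x_k = L ‖P_f x_k - x_k‖ ^ δ → 0`.
Fix `q` with `f q < 0`. For `0 < s ≤ 1` and large `k`, the point `(1 - s) x + s q` is a convex
combination of `x_k` and a point close to `q`, where `f < 0`; by quasi-convexity `f` is at most
`max (f x_k) 0` there, hence `≤ 0`. Letting `s → 0` in the closed set `{f ≤ 0}` gives `f x ≤ 0`,
so `x` is fixed. -/

open Filter Topology Set

section Quasiconvex

variable {E : Type*} [AddCommGroup E] [Module ℝ E] [TopologicalSpace E] [IsTopologicalAddGroup E]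
  [ContinuousSMul ℝ E] {f : E → ℝ} {xs : ℕ → E} {x q : E}

theorem nonpos_on_segment_of_tendsto_posPart (hqc : QuasiconvexOn ℝ univ f)
    (hopen : IsOpen {y | f y < 0}) (hq : f q < 0) (hxs : Tendsto xs atTop (𝓝 x))
    (hpos : Tendsto (fun k => max (f (xs k)) 0) atTop (𝓝 0)) {s : ℝ} (hs0 : 0 < s)
    (hs1 : s ≤ 1) : f ((1 - s) • x + s • q) ≤ 0 := by
  set ys : ℕ → E := fun k => q + ((1 - s) / s) • (x - xs k)
  have hys : Tendsto ys atTop (𝓝 q) := by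
    have h : Tendsto (fun k => x - xs k) atTop (𝓝 0) := by
      simpa using hxs.const_sub x
    simpa using (h.const_smul ((1 - s) / s)).const_add q
  have hcomb : ∀ k, s • ys k + (1 - s) • xs k = (1 - s) • x + s • q := by
    intro k
    have hss : s * ((1 - s) / s) = 1 - s := by field_simp
    simp only [ys, smul_add, smul_smul, hss]
    module
  refine le_of_forall_gt_imp_ge_of_dense fun ε hε => ?_
  obtain ⟨k, hyk, hxk⟩ :=
    ((hys.eventually_mem (hopen.mem_nhds hq)).and (hpos.eventually_lt_const hε)).exists
  calc f ((1 - s) • x + s • q) = f (s • ys k + (1 - s) • xs k) := by rw [hcomb]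
    _ ≤ max (f (ys k)) (f (xs k)) :=
      (quasiconvexOn_iff_le_max.1 hqc).2 (mem_univ _) (mem_univ _) hs0.le (by linarith)
        (by ring)
    _ ≤ ε := max_le ((show f (ys k) < 0 from hyk).trans hε).le
        ((le_max_left _ _).trans_lt hxk).le

theorem nonpos_of_tendsto_posPart (hqc : QuasiconvexOn ℝ univ f)
    (hopen : IsOpen {y | f y < 0}) (hclosed : IsClosed {y | f y ≤ 0}) (hq : f q < 0)
    (hxs : Tendsto xs atTop (𝓝 x)) (hpos : Tendsto (fun k => max (f (xs k)) 0) atTop (𝓝 0)) :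
    f x ≤ 0 := by
  have hseg : Tendsto (fun s : ℝ => (1 - s) • x + s • q) (𝓝[>] 0) (𝓝 x) := by
    have h : Continuous fun s : ℝ => (1 - s) • x + s • q := by fun_prop
    simpa using (h.tendsto 0).mono_left nhdsWithin_le_nhds
  refine hclosed.mem_of_tendsto hseg ?_
  filter_upwards [Ioo_mem_nhdsGT one_pos] with s hs
  exact nonpos_on_segment_of_tendsto_posPart hqc hopen hq hxs hpos hs.1 hs.2.le

end Quasiconvex

section StarProj

variable {n : ℕ} {f : EuclideanSpace ℝ (Fin n) → ℝ} {L δ : ℝ}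
  {c : EuclideanSpace ℝ (Fin n) → EuclideanSpace ℝ (Fin n)}

theorem norm_starProj_sub (hδ : δ ≠ 0) (hL : 0 ≤ L) (hc : ∀ y, 0 < f y → c y ≠ 0)
    (y : EuclideanSpace ℝ (Fin n)) :
    ‖starProj f L δ c y - y‖ = (max (f y) 0 / L) ^ (1 / δ) := by
  by_cases h : 0 < f y
  · rw [starProj, if_pos h, sub_sub_cancel_left, norm_neg, norm_smul, norm_smul, norm_inv,
      norm_norm, inv_mul_cancel₀ (norm_ne_zero_iff.2 (hc y h)), mul_one, Real.norm_eq_abs,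
      abs_of_nonneg (by positivity)]
  · rw [starProj, if_neg h, sub_self, norm_zero, max_eq_right (not_lt.1 h), zero_div,
      Real.zero_rpow (one_div_ne_zero hδ)]

theorem tendsto_posPart_of_tendsto_norm_starProj_sub (hδ : 0 < δ) (hL : 0 < L)
    (hc : ∀ y, 0 < f y → c y ≠ 0) {xs : ℕ → EuclideanSpace ℝ (Fin n)}
    (hres : Tendsto (fun k => ‖starProj f L δ c (xs k) - xs k‖) atTop (𝓝 0)) :
    Tendsto (fun k => max (f (xs k)) 0) atTop (𝓝 0) := by
  have hposPart : ∀ k, max (f (xs k)) 0 = L * ‖starProj f L δ c (xs k) - xs k‖ ^ δ := by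
    intro k
    rw [norm_starProj_sub hδ.ne' hL.le hc, one_div,
      Real.rpow_inv_rpow (div_nonneg (le_max_right _ _) hL.le) hδ.ne', mul_div_cancel₀ _ hL.ne']
  simp_rw [hposPart]
  simpa [Real.zero_rpow hδ.ne'] using (hres.rpow_const (Or.inr hδ.le)).const_mul L

theorem starProj_eq_self_of_nonpos {y : EuclideanSpace ℝ (Fin n)} (hy : f y ≤ 0) :
    starProj f L δ c y = y := by
  rw [starProj, if_neg hy.not_gt]

end StarProj

theorem starProj_fixedPointClosed_general {n : ℕ}
    (f : EuclideanSpace ℝ (Fin n) → ℝ) (δ L : ℝ) (hδ : 0 < δ) (hL : 0 < L)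
    (hqc : ∀ lam : ℝ, Convex ℝ {y : EuclideanSpace ℝ (Fin n) | f y ≤ lam})
    (husc : ∀ lam : ℝ, IsOpen {y : EuclideanSpace ℝ (Fin n) | f y < lam})
    (hlsc0 : IsClosed {y : EuclideanSpace ℝ (Fin n) | f y ≤ 0})
    (hne : {y : EuclideanSpace ℝ (Fin n) | f y < 0}.Nonempty)
    (c : EuclideanSpace ℝ (Fin n) → EuclideanSpace ℝ (Fin n))
    (hc : ∀ x, 0 < f x → c x ∈ starSubdiff f x ∧ c x ≠ 0)
    (xs : ℕ → EuclideanSpace ℝ (Fin n)) (x : EuclideanSpace ℝ (Fin n))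
    (hxs : Filter.Tendsto xs Filter.atTop (nhds x))
    (hres : Filter.Tendsto (fun k => ‖starProj f L δ c (xs k) - xs k‖) Filter.atTop (nhds 0)) :
    starProj f L δ c x = x := by
  have hqc' : QuasiconvexOn ℝ univ f := fun r => by simpa using hqc r
  obtain ⟨q, hq⟩ := hne
  have hpos := tendsto_posPart_of_tendsto_norm_starProj_sub hδ hL (fun y hy => (hc y hy).2) hres
  exact starProj_eq_self_of_nonpos (nonpos_of_tendsto_posPart hqc' (husc 0) hlsc0 hq hxs hpos)

/-- The star subgradient projection is fixed-point closed: if `x_k → x` and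
`‖P_f x_k - x_k‖ → 0`, then `x` is a fixed point of `P_f`. -/
theorem starProj_fixedPointClosed {n : ℕ}
    (f : EuclideanSpace ℝ (Fin n) → ℝ) (δ L : ℝ) (hδ : 0 < δ) (hL : 0 < L)
    (hqc : ∀ lam : ℝ, Convex ℝ {y : EuclideanSpace ℝ (Fin n) | f y ≤ lam})
    (husc : ∀ lam : ℝ, IsOpen {y : EuclideanSpace ℝ (Fin n) | f y < lam})
    (hlsc0 : IsClosed {y : EuclideanSpace ℝ (Fin n) | f y ≤ 0})
    (hne : {y : EuclideanSpace ℝ (Fin n) | f y < 0}.Nonempty)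
    (hhol : ∀ q x' : EuclideanSpace ℝ (Fin n), f q ≤ 0 → |f x' - f q| ≤ L * ‖x' - q‖ ^ δ)
    (c : EuclideanSpace ℝ (Fin n) → EuclideanSpace ℝ (Fin n))
    (hc : ∀ x, 0 < f x → c x ∈ starSubdiff f x ∧ c x ≠ 0)
    (xs : ℕ → EuclideanSpace ℝ (Fin n)) (x : EuclideanSpace ℝ (Fin n))
    (hxs : Filter.Tendsto xs Filter.atTop (nhds x))
    (hres : Filter.Tendsto (fun k => ‖starProj f L δ c (xs k) - xs k‖) Filter.atTop (nhds 0)) :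
    starProj f L δ c x = x :=
  starProj_fixedPointClosed_general f δ L hδ hL hqc husc hlsc0 hne c hc xs x hxs hres
end

section
/- Let f : ℝⁿ → ℝ be quasi-convex and upper semicontinuous with S^f_{<,0} ≠ ∅. Then ⋂_{n ∈ ℕ, n ≥ 1} cl(S^f_{<,1/n}) = cl(S^f_{≤,0}), where cl denotes topological closure. -/
/-- For a quasi-convex upper semicontinuous `f` with nonempty strict zero sublevel set,
the intersection of the closures of the sublevel sets `S^f_{<,1/n}`, `n ≥ 1`, equals
the closure of the sublevel set `S^f_{≤,0}`. -/
theorem iInter_closure_strict_sublevel {n : ℕ}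
    (f : EuclideanSpace ℝ (Fin n) → ℝ)
    (hqc : ∀ lam : ℝ, Convex ℝ {y : EuclideanSpace ℝ (Fin n) | f y ≤ lam})
    (husc : ∀ lam : ℝ, IsOpen {y : EuclideanSpace ℝ (Fin n) | f y < lam})
    (hne : {y : EuclideanSpace ℝ (Fin n) | f y < 0}.Nonempty) :
    ⋂ k : ℕ, ⋂ (_ : 1 ≤ k), closure {y : EuclideanSpace ℝ (Fin n) | f y < 1 / (k : ℝ)} =
      closure {y : EuclideanSpace ℝ (Fin n) | f y ≤ 0} := by
  obtain ⟨x₀, hx₀⟩ := hne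
  obtain ⟨ε, hε, hball⟩ := Metric.isOpen_iff.mp (husc 0) x₀ hx₀
  apply Set.Subset.antisymm
  · intro x hx
    rw [Set.mem_iInter] at hx
    have key : ∀ t : ℝ, 0 < t → t < 1 → f ((1-t)•x + t•x₀) ≤ 0 := by
      intro t ht ht1
      have hle : ∀ k : ℕ, 1 ≤ k → f ((1-t)•x + t•x₀) ≤ 1/(k:ℝ) := by
        intro k hk
        have hxk := Set.mem_iInter.mp (hx k) hk
        rw [Metric.mem_closure_iff] at hxk
        obtain ⟨z, hz, hdz⟩ := hxk (t*ε) (by positivity)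
        set y := x₀ + ((1-t)/t) • (x - z) with hy
        have hyb : y ∈ Metric.ball x₀ ε := by
          rw [Metric.mem_ball, dist_eq_norm]
          have hxy : y - x₀ = ((1-t)/t) • (x - z) := by rw [hy]; abel
          rw [hxy, norm_smul, Real.norm_eq_abs,
            abs_of_nonneg (div_nonneg (by linarith) ht.le)]
          have h1 : ‖x - z‖ < t*ε := by rw [← dist_eq_norm]; exact hdz
          calc (1-t)/t * ‖x - z‖ ≤ (1-t)/t * (t*ε) := by
                apply mul_le_mul_of_nonneg_left h1.le (div_nonneg (by linarith) ht.le)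
            _ = (1-t)*ε := by field_simp
            _ < 1*ε := by nlinarith
            _ = ε := one_mul ε
        have hfy : f y < 0 := hball hyb
        have hk0 : (0:ℝ) < 1/(k:ℝ) := by
          have : (0:ℝ) < (k:ℝ) := by exact_mod_cast hk
          positivity
        have hz' : z ∈ {y : EuclideanSpace ℝ (Fin n) | f y ≤ 1/(k:ℝ)} := by
          simpa using (show f z ≤ 1/(k:ℝ) from le_of_lt hz)
        have hy' : y ∈ {y : EuclideanSpace ℝ (Fin n) | f y ≤ 1/(k:ℝ)} :=
          le_of_lt (hfy.trans hk0)
        have hconv := (hqc (1/(k:ℝ))) hz' hy' (by linarith : (0:ℝ) ≤ 1-t) ht.le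
          (by ring : (1-t) + t = 1)
        have heq : (1-t)•z + t•y = (1-t)•x + t•x₀ := by
          rw [hy, smul_add, smul_smul]
          have ht' : t * ((1-t)/t) = 1-t := by field_simp
          rw [ht']; module
        rwa [heq] at hconv
      by_contra hcon
      push_neg at hcon
      obtain ⟨m, hm⟩ := exists_nat_one_div_lt hcon
      have := hle (m+1) (Nat.le_add_left 1 m)
      push_cast at this hm
      linarith
    rw [Metric.mem_closure_iff]
    intro δ hδ
    set D := dist x₀ x with hD
    set t : ℝ := min (1/2) (δ/(2*(D+1))) with htdef
    have hD0 : 0 ≤ D := dist_nonneg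
    have ht : 0 < t := lt_min (by norm_num) (by positivity)
    have ht1 : t < 1 := lt_of_le_of_lt (min_le_left _ _) (by norm_num)
    refine ⟨(1-t)•x + t•x₀, key t ht ht1, ?_⟩
    have hdist : dist x ((1-t)•x + t•x₀) = t * D := by
      rw [dist_eq_norm]
      have hxw : x - ((1-t)•x + t•x₀) = t • (x - x₀) := by module
      rw [hxw, norm_smul, Real.norm_eq_abs, abs_of_pos ht, ← dist_eq_norm, dist_comm]
    rw [hdist]
    have h2 : t ≤ δ/(2*(D+1)) := min_le_right _ _
    calc t * D ≤ (δ/(2*(D+1))) * D := mul_le_mul_of_nonneg_right h2 hD0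
      _ < δ := by
          rw [div_mul_eq_mul_div, div_lt_iff₀ (by positivity)]
          nlinarith
  · refine Set.subset_iInter fun k => Set.subset_iInter fun hk => closure_mono fun y hy => ?_
    have hk0 : (0:ℝ) < 1/(k:ℝ) := by
      have : (0:ℝ) < (k:ℝ) := by exact_mod_cast hk
      positivity
    exact lt_of_le_of_lt hy hk0
end

section
/- Let {C_n}_{n ≥ 1} be a decreasing sequence (C_{n+1} ⊆ C_n) of open convex subsets of ℝⁿ such that the intersection ⋂_n C_n contains a nonempty open set. Then ⋂_n cl(C_n) = cl(⋂_n C_n). -/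
open Set

/- If `x` lies in the interior of every `s i` and `y` in every closure, the open segment from `x`
to `y` lies in every `s i`, and `y` is a limit point of that segment. -/
theorem Convex.iInter_closure_eq_closure_iInter {𝕜 E ι : Type*} [Field 𝕜] [LinearOrder 𝕜]
    [IsStrictOrderedRing 𝕜] [TopologicalSpace 𝕜] [OrderTopology 𝕜] [AddCommGroup E]
    [TopologicalSpace E] [IsTopologicalAddGroup E] [Module 𝕜 E] [ContinuousSMul 𝕜 E]
    {s : ι → Set E} (hs : ∀ i, Convex 𝕜 (s i)) {x : E} (hx : ∀ i, x ∈ interior (s i)) :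
    ⋂ i, closure (s i) = closure (⋂ i, s i) := by
  refine subset_antisymm (fun y hy => ?_)
    (subset_iInter fun i => closure_mono (iInter_subset s i))
  have hseg : openSegment 𝕜 x y ⊆ ⋂ i, s i := subset_iInter fun i =>
    ((hs i).openSegment_interior_closure_subset_interior (hx i) (mem_iInter.1 hy i)).trans
      interior_subset
  exact closure_mono hseg (segment_subset_closure_openSegment (right_mem_segment 𝕜 x y))

/-- For a decreasing sequence of open convex subsets of `ℝⁿ` whose intersection contains a
nonempty open set, the intersection of the closures equals the closure of the intersection. -/
theorem iInter_closure_eq_closure_iInter {n : ℕ}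
    (C : ℕ → Set (EuclideanSpace ℝ (Fin n)))
    (hconv : ∀ k : ℕ, Convex ℝ (C k))
    (hU : ∃ U : Set (EuclideanSpace ℝ (Fin n)), IsOpen U ∧ U.Nonempty ∧ U ⊆ ⋂ k : ℕ, C k) :
    ⋂ k : ℕ, closure (C k) = closure (⋂ k : ℕ, C k) := by
  obtain ⟨U, hUopen, ⟨u, huU⟩, hUsub⟩ := hU
  have hu : u ∈ interior (⋂ k, C k) := interior_maximal hUsub hUopen huU
  exact Convex.iInter_closure_eq_closure_iInter hconv fun k => interior_mono (iInter_subset C k) hu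
end

section
/- Let T₁, …, T_m : ℝⁿ → ℝⁿ be cutters with ⋂_{i=1}^m Fix T_i ≠ ∅, and let T := T_m ∘ T_{m−1} ∘ ⋯ ∘ T₁. Then T is strongly quasi-nonexpansive with respect to the common fixed points: for every x ∈ ℝⁿ and every z ∈ ⋂_{i=1}^m Fix T_i, ‖Tx − z‖ ≤ ‖x − z‖, and moreover ⋂_{i=1}^m Fix T_i ⊆ Fix T. -/
/-- The composition `T_m ∘ T_{m-1} ∘ ⋯ ∘ T_1` of a finite family of operators
(`T 0` is applied first, `T (m-1)` last). -/
def compFamily {n m : ℕ}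
    (T : Fin m → (EuclideanSpace ℝ (Fin n) → EuclideanSpace ℝ (Fin n))) :
    EuclideanSpace ℝ (Fin n) → EuclideanSpace ℝ (Fin n) :=
  fun x => (List.ofFn T).foldl (fun y g => g y) x

/-!
Each cutter `S` moves a point `x` to `y = S x` with `⟪y - x, y - z⟫ ≤ 0` for every fixed point `z`,
so `x - z = (x - y) + (y - z)` is a sum with nonnegative cross term and `‖y - z‖ ≤ ‖x - z‖`.
Distances to a common fixed point `z` therefore never increase along the composition, and taking
`x = z` shows that `z` is fixed by it.
-/

open scoped RealInnerProductSpace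

theorem norm_sub_le_of_inner_sub_nonpos {E : Type*} [NormedAddCommGroup E]
    [InnerProductSpace ℝ E] {x y z : E} (h : ⟪y - x, y - z⟫ ≤ 0) : ‖y - z‖ ≤ ‖x - z‖ := by
  have hcross : 0 ≤ ⟪x - y, y - z⟫ := by
    rw [← neg_sub, inner_neg_left]
    exact neg_nonneg.mpr h
  have hsq : ‖y - z‖ ^ 2 ≤ ‖x - z‖ ^ 2 := by
    calc ‖y - z‖ ^ 2
        ≤ ‖x - y‖ ^ 2 + 2 * ⟪x - y, y - z⟫ + ‖y - z‖ ^ 2 := by linarith [sq_nonneg ‖x - y‖]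
      _ = ‖x - z‖ ^ 2 := by rw [← norm_add_sq_real, sub_add_sub_cancel]
  exact (pow_le_pow_iff_left₀ (norm_nonneg _) (norm_nonneg _) two_ne_zero).mp hsq

theorem dist_foldl_le {α : Type*} [PseudoMetricSpace α] (z : α) (L : List (α → α))
    (hL : ∀ g ∈ L, ∀ x, dist (g x) z ≤ dist x z) (x : α) :
    dist (L.foldl (fun y g => g y) x) z ≤ dist x z := by
  induction L generalizing x with
  | nil => exact le_rfl
  | cons g L ih =>
    rw [List.foldl_cons]
    exact (ih (fun h hh => hL h (List.mem_cons_of_mem _ hh)) (g x)).trans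
      (hL g List.mem_cons_self x)

theorem compFamily_cutters_qne_general {n m : ℕ}
    (T : Fin m → (EuclideanSpace ℝ (Fin n) → EuclideanSpace ℝ (Fin n)))
    (hcut : ∀ i : Fin m, ∀ x y : EuclideanSpace ℝ (Fin n),
      T i y = y → (inner ℝ (T i x - x) (T i x - y) : ℝ) ≤ 0) :
    (∀ x z : EuclideanSpace ℝ (Fin n), (∀ i : Fin m, T i z = z) →
        ‖compFamily T x - z‖ ≤ ‖x - z‖) ∧
      ∀ z : EuclideanSpace ℝ (Fin n), (∀ i : Fin m, T i z = z) → compFamily T z = z := by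
  have hqne : ∀ x z, (∀ i, T i z = z) → ‖compFamily T x - z‖ ≤ ‖x - z‖ := by
    intro x z hz
    have hstep : ∀ g ∈ List.ofFn T, ∀ y, dist (g y) z ≤ dist y z := by
      rintro _ hg y
      obtain ⟨i, rfl⟩ := List.mem_ofFn.mp hg
      simpa only [dist_eq_norm] using norm_sub_le_of_inner_sub_nonpos (hcut i y z (hz i))
    rw [← dist_eq_norm, ← dist_eq_norm]
    exact dist_foldl_le z (List.ofFn T) hstep x
  refine ⟨hqne, fun z hz => ?_⟩
  simpa only [sub_self, norm_zero, norm_le_zero_iff, sub_eq_zero] using hqne z z hz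

/-- The composition of cutters with a common fixed point is quasi-nonexpansive with respect to
the common fixed points, and every common fixed point is a fixed point of the composition. -/
theorem compFamily_cutters_qne {n m : ℕ} (hm : 0 < m)
    (T : Fin m → (EuclideanSpace ℝ (Fin n) → EuclideanSpace ℝ (Fin n)))
    (hcut : ∀ i : Fin m, ∀ x y : EuclideanSpace ℝ (Fin n),
      T i y = y → (inner ℝ (T i x - x) (T i x - y) : ℝ) ≤ 0)
    (hfix : ∃ z : EuclideanSpace ℝ (Fin n), ∀ i : Fin m, T i z = z) :
    (∀ x z : EuclideanSpace ℝ (Fin n), (∀ i : Fin m, T i z = z) →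
        ‖compFamily T x - z‖ ≤ ‖x - z‖) ∧
      ∀ z : EuclideanSpace ℝ (Fin n), (∀ i : Fin m, T i z = z) → compFamily T z = z :=
  compFamily_cutters_qne_general T hcut
end
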